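/- Let [B B_c] ∈ ℝ^{N×N} be an orthogonal matrix with B ∈ ℝ^{N×r} and B_c ∈ ℝ^{N×(N−r)}, and let P ∈ ℝ^{(N−r)×r} be any matrix. Then ‖(B + B_c·P)·(I_r + PᵀP)^{−1/2} − B‖₂ ≤ 2·‖P‖₂. -/

import Mathlib

open Matrix

open scoped ComplexOrder in
/-- The positive semidefinite square root of a positive semidefinite matrix
(the definition of Mathlib of December 2024, since removed from Mathlib). -/
noncomputable def Matrix.PosSemidef.sqrt {n : Type*} [Fintype n] [DecidableEq n]
    {𝕜 : Type*} [RCLike 𝕜] {A : Matrix n n 𝕜} (hA : A.PosSemidef) : Matrix n n 𝕜 :=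
  hA.1.eigenvectorUnitary.1 * diagonal ((↑) ∘ (Real.sqrt ·) ∘ hA.1.eigenvalues) *
  (star hA.1.eigenvectorUnitary : Matrix n n 𝕜)

/-- Frobenius norm of a real matrix: `(tr(MᵀM))^{1/2}`. -/
noncomputable def frobNorm {m n : ℕ} (M : Matrix (Fin m) (Fin n) ℝ) : ℝ :=
  Real.sqrt ((Mᵀ * M).trace)

/-- Nuclear norm of a real matrix: the trace of the positive semidefinite
square root of `MᵀM` (= sum of singular values). -/
noncomputable def nuclearNorm {m n : ℕ} (M : Matrix (Fin m) (Fin n) ℝ) : ℝ :=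
  (Matrix.posSemidef_conjTranspose_mul_self M).sqrt.trace

/-- Spectral (ℓ2 → ℓ2 operator) norm of a real matrix: its largest singular value. -/
noncomputable def opNorm {m n : ℕ} (M : Matrix (Fin m) (Fin n) ℝ) : ℝ :=
  ‖LinearMap.toContinuousLinearMap (Matrix.toEuclideanLin M)‖

/-- The ℓ1 norm of the vectorization of a matrix. -/
noncomputable def vecL1 {m n : ℕ} (M : Matrix (Fin m) (Fin n) ℝ) : ℝ :=
  ∑ i, ∑ j, |M i j|

/-- The ℓ∞ norm of the vectorization of a matrix. -/
noncomputable def vecLinf {m n : ℕ} (M : Matrix (Fin m) (Fin n) ℝ) : ℝ :=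
  ⨆ i, ⨆ j, |M i j|

/-- Frobenius (trace) inner product of two matrices. -/
noncomputable def traceInner {m n : ℕ} (M N : Matrix (Fin m) (Fin n) ℝ) : ℝ :=
  (Mᵀ * N).trace

open scoped Classical in
/-- The inverse of the positive semidefinite square root of a positive semidefinite
matrix (junk value `0` if the matrix is not positive semidefinite). -/
noncomputable def matInvSqrt {r : ℕ} (S : Matrix (Fin r) (Fin r) ℝ) :
    Matrix (Fin r) (Fin r) ℝ :=
  if h : S.PosSemidef then h.sqrt⁻¹ else 0
/-! Write `Q = (I + PᵀP)^{-1/2}`, so that `(B + B_c P) Q - B = B (Q - I) + B_c P Q`. Matrices with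
orthonormal columns have norm at most `1`, and by the functional calculus `Q = g(PᵀP)` with
`g t = (1 + t)^{-1/2}`. On the spectrum of `PᵀP`, which lies in `[0, ‖P‖²]`, we have `0 < g ≤ 1` and
`1 - g t ≤ √t ≤ ‖P‖`, hence `‖Q‖ ≤ 1` and `‖Q - I‖ ≤ ‖P‖`: each summand has norm at most `‖P‖`. -/

open scoped Matrix.Norms.L2Operator ComplexOrder MatrixOrder

theorem opNorm_eq_l2_opNorm {m n : ℕ} (M : Matrix (Fin m) (Fin n) ℝ) : opNorm M = ‖M‖ := rfl

theorem Real.inv_sqrt_one_add_le_one {t : ℝ} (ht : 0 ≤ t) : (√(1 + t))⁻¹ ≤ 1 :=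
  inv_le_one_of_one_le₀ (Real.one_le_sqrt.2 (by linarith))

theorem Real.one_sub_inv_sqrt_one_add_le_sqrt {t : ℝ} (ht : 0 ≤ t) :
    1 - (√(1 + t))⁻¹ ≤ √t := by
  set s := √(1 + t)
  have hs : 1 ≤ s := Real.one_le_sqrt.2 (by linarith)
  have hs_le : s ≤ 1 + √t :=
    Real.sqrt_le_iff.2 ⟨by positivity, by nlinarith [Real.sq_sqrt ht, Real.sqrt_nonneg t]⟩
  have hs_inv : s * s⁻¹ = 1 := mul_inv_cancel₀ (by positivity)
  have : 1 - s⁻¹ ≤ s - 1 := by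
    nlinarith [sq_nonneg (s - 1), inv_pos.2 (zero_lt_one.trans_le hs)]
  linarith

namespace Matrix

-- `‖1‖ = 0` for an empty index type, so there is no `NormOneClass` instance to appeal to.
theorem l2_opNorm_one_le {n : Type*} [Fintype n] [DecidableEq n] :
    ‖(1 : Matrix n n ℝ)‖ ≤ 1 := by
  rw [← diagonal_one, l2_opNorm_diagonal]
  exact (pi_norm_le_iff_of_nonneg zero_le_one).2 fun _ => by simp

theorem posSemidef_transpose_mul_self {m n : Type*} [Fintype m] [Fintype n] (A : Matrix m n ℝ) :
    (Aᵀ * A).PosSemidef := by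
  simpa using posSemidef_conjTranspose_mul_self A

section Rectangular

variable {m n : Type*} [Fintype m] [Fintype n] [DecidableEq n]

theorem l2_opNorm_transpose_mul_self (A : Matrix m n ℝ) : ‖Aᵀ * A‖ = ‖A‖ * ‖A‖ := by
  rw [← l2_opNorm_conjTranspose_mul_self, conjTranspose_eq_transpose_of_trivial]

theorem l2_opNorm_le_one_of_transpose_mul_self_eq_one {A : Matrix m n ℝ}
    (h : Aᵀ * A = 1) : ‖A‖ ≤ 1 := by
  have h1 : ‖A‖ * ‖A‖ ≤ 1 := by
    rw [← l2_opNorm_transpose_mul_self, h]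
    exact l2_opNorm_one_le
  nlinarith [norm_nonneg A]

end Rectangular

theorem PosSemidef.spectrum_subset_Icc {n : Type*} [Fintype n] [DecidableEq n]
    {A : Matrix n n ℝ} (hA : A.PosSemidef) : spectrum ℝ A ⊆ Set.Icc 0 ‖A‖ := by
  intro t ht
  have hle : ‖t‖ ≤ ‖A‖ := by
    have := norm_apply_le_norm_cfc id A ht
    rwa [cfc_id ℝ A] at this
  exact ⟨spectrum_nonneg_of_nonneg hA.nonneg ht, (le_abs_self t).trans hle⟩

theorem PosSemidef.sqrt_eq_cfc {n 𝕜 : Type*} [Fintype n] [DecidableEq n] [RCLike 𝕜]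
    {A : Matrix n n 𝕜} (hA : A.PosSemidef) : hA.sqrt = cfc Real.sqrt A := by
  rw [hA.1.cfc_eq, IsHermitian.cfc, Unitary.conjStarAlgAut_apply, PosSemidef.sqrt]

namespace PosSemidef

variable {r : ℕ} {A : Matrix (Fin r) (Fin r) ℝ}

theorem matInvSqrt_one_add (hA : A.PosSemidef) :
    matInvSqrt (1 + A) = cfc (fun t => (√(1 + t))⁻¹) A := by
  have hS : (1 + A).PosSemidef := PosSemidef.one.add hA
  have hcont (f : ℝ → ℝ) : ContinuousOn f (spectrum ℝ A) := A.finite_real_spectrum.continuousOn f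
  have hS_cfc : 1 + A = cfc (fun t : ℝ => 1 + t) A := by
    rw [cfc_const_add _ _ A, cfc_id' ℝ A, map_one]
  rw [matInvSqrt, dif_pos hS, hS.sqrt_eq_cfc]
  apply inv_eq_left_inv
  rw [hS_cfc, ← cfc_comp' .., ← cfc_mul _ _ A (hcont _) (hcont _), ← cfc_one ℝ A]
  refine cfc_congr fun t ht => inv_mul_cancel₀ ?_
  have := (hA.spectrum_subset_Icc ht).1
  positivity

theorem l2_opNorm_matInvSqrt_one_add_le_one (hA : A.PosSemidef) :
    ‖matInvSqrt (1 + A)‖ ≤ 1 := by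
  rw [hA.matInvSqrt_one_add]
  refine norm_cfc_le zero_le_one fun t ht => ?_
  have ht0 := (hA.spectrum_subset_Icc ht).1
  rw [Real.norm_of_nonneg (by positivity)]
  exact Real.inv_sqrt_one_add_le_one ht0

theorem l2_opNorm_matInvSqrt_one_add_sub_one_le (hA : A.PosSemidef) :
    ‖matInvSqrt (1 + A) - 1‖ ≤ √‖A‖ := by
  have hcont (f : ℝ → ℝ) : ContinuousOn f (spectrum ℝ A) := A.finite_real_spectrum.continuousOn f
  rw [hA.matInvSqrt_one_add, ← cfc_const_one ℝ A, ← cfc_sub _ _ _ (hcont _) (hcont _)]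
  refine norm_cfc_le (Real.sqrt_nonneg _) fun t ht => ?_
  obtain ⟨ht0, htA⟩ := hA.spectrum_subset_Icc ht
  rw [Real.norm_eq_abs, abs_sub_comm, abs_of_nonneg (sub_nonneg.2 (Real.inv_sqrt_one_add_le_one ht0))]
  exact (Real.one_sub_inv_sqrt_one_add_le_sqrt ht0).trans (Real.sqrt_le_sqrt htA)

end PosSemidef

end Matrix

theorem stmt_15_general
    (N r : ℕ)
    (B : Matrix (Fin N) (Fin r) ℝ) (Bc : Matrix (Fin N) (Fin (N - r)) ℝ)
    (hB : Bᵀ * B = 1) (hBc : Bcᵀ * Bc = 1)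
    (P : Matrix (Fin (N - r)) (Fin r) ℝ) :
    opNorm ((B + Bc * P) * matInvSqrt (1 + Pᵀ * P) - B) ≤ 2 * opNorm P := by
  have hPP := posSemidef_transpose_mul_self P
  have hB1 := l2_opNorm_le_one_of_transpose_mul_self_eq_one hB
  have hBc1 := l2_opNorm_le_one_of_transpose_mul_self_eq_one hBc
  have hQ1 := hPP.l2_opNorm_matInvSqrt_one_add_le_one
  have hQsub := hPP.l2_opNorm_matInvSqrt_one_add_sub_one_le
  rw [l2_opNorm_transpose_mul_self, Real.sqrt_mul_self (norm_nonneg P)] at hQsub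
  set Q := matInvSqrt (1 + Pᵀ * P)
  have hsplit : (B + Bc * P) * Q - B = B * (Q - 1) + Bc * P * Q := by
    rw [Matrix.add_mul, Matrix.mul_sub, Matrix.mul_one]
    abel
  rw [opNorm_eq_l2_opNorm, opNorm_eq_l2_opNorm, hsplit]
  calc ‖B * (Q - 1) + Bc * P * Q‖ ≤ ‖B * (Q - 1)‖ + ‖Bc * P * Q‖ := norm_add_le _ _
    _ ≤ ‖B‖ * ‖Q - 1‖ + ‖Bc‖ * ‖P‖ * ‖Q‖ := by
      gcongr
      · exact l2_opNorm_mul _ _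
      · exact (l2_opNorm_mul _ _).trans (by gcongr; exact l2_opNorm_mul _ _)
    _ ≤ 1 * ‖P‖ + 1 * ‖P‖ * 1 := by gcongr
    _ = 2 * ‖P‖ := by ring

/-- Bound on the distance between the perturbed orthonormal basis and the
original one: `‖(B + B_c·P)(I + PᵀP)^{-1/2} − B‖₂ ≤ 2‖P‖₂`. -/
theorem stmt_15
    (N r : ℕ)
    (B : Matrix (Fin N) (Fin r) ℝ) (Bc : Matrix (Fin N) (Fin (N - r)) ℝ)
    (hB : Bᵀ * B = 1) (hBc : Bcᵀ * Bc = 1) (hBBc : Bᵀ * Bc = 0)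
    (hfull : B * Bᵀ + Bc * Bcᵀ = 1)
    (P : Matrix (Fin (N - r)) (Fin r) ℝ) :
    opNorm ((B + Bc * P) * matInvSqrt (1 + Pᵀ * P) - B) ≤ 2 * opNorm P :=
  stmt_15_general N r B Bc hB hBc P
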